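/- Short-time lower bound for the heat kernel variance: let g_t(θ,θ') be the Green function of ∂_t g = ½ ∂²_θ g on (0,1) with boundary conditions g_t(0,θ') = ∂_θ g_t(1,θ') = 0 and initial condition δ_θ, and set q_t(θ) = ∫₀^t g_{2s}(θ,θ) ds. Then for every δ ∈ (0,1/2) there is κ_δ > 0 such that q_t(θ) ≥ κ_δ t^{1/2} for all t ∈ [0,1] and θ ∈ [δ, 1−δ]. -/

import Mathlib

open MeasureTheory ProbabilityTheory Real Filter

noncomputable section

/-- `B` is a standard Brownian motion on `[0,1]` (in fact on `[0,∞)`) started at `0`. -/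
def IsStandardBM {Ω : Type*} [MeasureSpace Ω] (B : ℝ → Ω → ℝ) : Prop :=
  (∀ t, Measurable (B t)) ∧
  (∀ᵐ ω, B 0 ω = 0) ∧
  (∀ s t : ℝ, 0 ≤ s → s ≤ t →
    Measure.map (fun ω => B t ω - B s ω) volume = gaussianReal 0 ((t - s).toNNReal)) ∧
  (∀ (n : ℕ) (u : ℕ → ℝ), Monotone u →
    iIndepFun
      (fun i : Fin n => fun ω => B (u (i.1 + 1)) ω - B (u i.1) ω) volume) ∧
  (∀ᵐ ω, Continuous fun t => B t ω)

/-- The `L²(0,1)` inner product. -/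
def innerL (f g : ℝ → ℝ) : ℝ := ∫ θ in (0:ℝ)..1, f θ * g θ

/-- The covariance operator with kernel `θ ∧ σ`. -/
def Qop (k : ℝ → ℝ) : ℝ → ℝ := fun θ => ∫ σ in (0:ℝ)..1, min θ σ * k σ

def lam (θ x y : ℝ) : ℝ := x ^ 2 + x * y / θ + (y ^ 2 - θ) / (4 * θ ^ 2)

/-- smooth symmetric probability density supported in `(-1,1)`. -/
def IsMollifier (ρ : ℝ → ℝ) : Prop :=
  (∀ n : ℕ, ContDiff ℝ n ρ) ∧ (∀ x, 0 ≤ ρ x) ∧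
  (Function.support ρ ⊆ Set.Ioo (-1) 1) ∧ (∫ x, ρ x) = 1 ∧ (∀ x, ρ (-x) = ρ x)

def mollK (ρ : ℝ → ℝ) (ε : ℝ) : ℝ → ℝ := fun x => ρ (x / ε) / ε

/-- `(-ρ_ε' * f)_θ`, i.e. the derivative in `θ` of the mollification `∫₀¹ ρ_ε(σ-θ) f σ dσ`. -/
def smoothDeriv (ρ : ℝ → ℝ) (ε : ℝ) (f : ℝ → ℝ) (θ : ℝ) : ℝ :=
  ∫ σ in (0:ℝ)..1, -(deriv (mollK ρ ε) (σ - θ)) * f σ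

def Bdot {Ω : Type*} [MeasureSpace Ω] (B : ℝ → Ω → ℝ) (ρ : ℝ → ℝ) (ε θ : ℝ) (ω : Ω) : ℝ :=
  smoothDeriv ρ ε (fun σ => B σ ω) θ

def cEps {Ω : Type*} [MeasureSpace Ω] (B : ℝ → Ω → ℝ) (ρ : ℝ → ℝ) (ε θ : ℝ) : ℝ :=
  ∫ ω, (Bdot B ρ ε θ ω) ^ 2

/-!
The first `N ≈ 1 / (4 √t)` modes have `λ_i t ≤ 1`, so each contributes at least
`t / 2 · e_i(θ)²`, and `e_i(θ)² = 1 - cos ((2i+1)πθ)`. The cosine sum telescopes,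
`2 sin(πθ) Σ_{i<N} cos ((2i+1)πθ) = sin (2Nπθ)`, so it stays bounded by `1 / (2 sin(πθ))`,
uniformly for `θ ∈ [δ, 1-δ]`. Hence `q_t(θ) ≥ t/2 · (N - O(1)) ≈ √t / 8` for small `t`;
for the remaining times `q_t(θ)` is increasing in `t`.
-/

open Finset in
theorem Real.two_mul_sin_mul_sum_range_cos_odd_mul (a : ℝ) (N : ℕ) :
    2 * sin a * ∑ i ∈ range N, cos ((2 * i + 1) * a) = sin (2 * N * a) := by
  induction N with
  | zero => simp
  | succ n ih =>
    rw [sum_range_succ, mul_add, ih]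
    push_cast
    rw [show 2 * ((n : ℝ) + 1) * a = (2 * n + 1) * a + a by ring,
      show 2 * (n : ℝ) * a = (2 * n + 1) * a - a by ring, sin_add, sin_sub]
    ring

theorem Real.sum_range_cos_odd_mul_le {a : ℝ} (ha : 0 < sin a) (N : ℕ) :
    ∑ i ∈ Finset.range N, cos ((2 * i + 1) * a) ≤ 1 / (2 * sin a) := by
  rw [le_div_iff₀ (by positivity)]
  calc (∑ i ∈ Finset.range N, cos ((2 * i + 1) * a)) * (2 * sin a)
      = sin (2 * N * a) := by rw [← two_mul_sin_mul_sum_range_cos_odd_mul]; ring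
    _ ≤ 1 := sin_le_one _

theorem Real.two_mul_le_sin_pi_mul {θ : ℝ} (h0 : 0 ≤ θ) (h1 : θ ≤ 1 / 2) :
    2 * θ ≤ sin (π * θ) := by
  calc 2 * θ = 2 / π * (π * θ) := by field_simp
    _ ≤ sin (π * θ) := mul_le_sin (by positivity) (by nlinarith [pi_pos])

theorem Real.two_mul_min_le_sin_pi_mul {θ : ℝ} (h0 : 0 ≤ θ) (h1 : θ ≤ 1) :
    2 * min θ (1 - θ) ≤ sin (π * θ) := by
  rcases le_total θ (1 / 2) with h | h
  · exact (by gcongr; exact min_le_left _ _ : 2 * min θ (1 - θ) ≤ 2 * θ).trans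
      (two_mul_le_sin_pi_mul h0 h)
  · rw [← sin_pi_sub, show π - π * θ = π * (1 - θ) by ring]
    exact (by gcongr; exact min_le_right _ _ : 2 * min θ (1 - θ) ≤ 2 * (1 - θ)).trans
      (two_mul_le_sin_pi_mul (by linarith) (by linarith))

theorem Real.half_le_one_sub_exp_neg {x : ℝ} (hx0 : 0 ≤ x) (hx1 : x ≤ 1) :
    x / 2 ≤ 1 - exp (-x) := by
  have h : (x + 1) * exp (-x) ≤ 1 := by
    calc (x + 1) * exp (-x) ≤ exp x * exp (-x) := by gcongr; exact add_one_le_exp x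
      _ = 1 := by rw [← exp_add, add_neg_cancel, exp_zero]
  nlinarith [exp_pos (-x)]

section ExpFactor

variable {l : ℝ}

theorem monotone_one_sub_exp_neg_mul_div (hl : 0 < l) :
    Monotone fun t : ℝ => (1 - exp (-l * t)) / l := by
  intro s t hst
  have : exp (-l * t) ≤ exp (-l * s) := exp_le_exp.2 (by nlinarith)
  dsimp only
  gcongr

theorem one_sub_exp_neg_mul_div_nonneg (hl : 0 < l) {t : ℝ} (ht : 0 ≤ t) :
    0 ≤ (1 - exp (-l * t)) / l := by
  simpa using monotone_one_sub_exp_neg_mul_div hl ht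

theorem one_sub_exp_neg_mul_div_le_one_div (hl : 0 < l) (t : ℝ) :
    (1 - exp (-l * t)) / l ≤ 1 / l := by
  gcongr
  linarith [exp_pos (-l * t)]

theorem half_le_one_sub_exp_neg_mul_div (hl : 0 < l) {t : ℝ} (ht : 0 ≤ t) (hlt : l * t ≤ 1) :
    t / 2 ≤ (1 - exp (-l * t)) / l := by
  rw [le_div_iff₀ hl, neg_mul]
  linarith [half_le_one_sub_exp_neg (mul_nonneg hl.le ht) hlt]

end ExpFactor

namespace DirichletNeumannHeat

def eigenvalue (i : ℕ) : ℝ := π ^ 2 / 4 * (2 * (i : ℝ) + 1) ^ 2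

theorem eigenvalue_pos (i : ℕ) : 0 < eigenvalue i := by
  unfold eigenvalue
  positivity

theorem sqrt_eigenvalue (i : ℕ) : √(eigenvalue i) = π * (2 * i + 1) / 2 := by
  rw [eigenvalue, show π ^ 2 / 4 * (2 * (i : ℝ) + 1) ^ 2 = (π * (2 * i + 1) / 2) ^ 2 by ring]
  exact sqrt_sq (by positivity)

theorem sq_add_one_le_eigenvalue (i : ℕ) : ((i : ℝ) + 1) ^ 2 ≤ eigenvalue i := by
  have hπ : 4 ≤ π ^ 2 := by nlinarith [pi_gt_three]
  have hi : ((i : ℝ) + 1) ^ 2 ≤ (2 * (i : ℝ) + 1) ^ 2 := by gcongr; linarith [i.cast_nonneg (α := ℝ)]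
  unfold eigenvalue
  nlinarith [sq_nonneg (2 * (i : ℝ) + 1)]

theorem summable_one_div_eigenvalue : Summable fun i => 1 / eigenvalue i := by
  have h : Summable fun i : ℕ => 1 / ((i : ℝ) + 1) ^ 2 := by
    simpa using (summable_nat_add_iff 1).2 (summable_one_div_nat_pow.2 one_lt_two)
  refine h.of_nonneg_of_le (fun i => (one_div_pos.2 (eigenvalue_pos i)).le) fun i => ?_
  gcongr
  exact sq_add_one_le_eigenvalue i

theorem eigenvalue_mul_le_one {i : ℕ} {t : ℝ} (ht : 0 ≤ t) (h : (2 * i + 1) * √t ≤ 1 / 2) :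
    eigenvalue i * t ≤ 1 := by
  have hsq : (2 * (i : ℝ) + 1) ^ 2 * t ≤ 1 / 4 := by
    rw [← sq_sqrt ht, ← mul_pow]
    nlinarith [mul_nonneg (by positivity : (0 : ℝ) ≤ 2 * i + 1) (sqrt_nonneg t)]
  have hπ : π ^ 2 ≤ 16 := by nlinarith [pi_pos, pi_le_four]
  rw [eigenvalue, mul_assoc]
  nlinarith [mul_nonneg (sq_nonneg (2 * (i : ℝ) + 1)) ht]

theorem sq_sqrt_two_mul_sin (x : ℝ) : (√2 * sin x) ^ 2 = 1 - cos (2 * x) := by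
  rw [mul_pow, sq_sqrt zero_le_two, cos_two_mul]
  nlinarith [sin_sq_add_cos_sq x]

/-- The `i`-th term of `q_t(θ)`, with `e_i(θ)² = 2 sin² (√λ_i θ)` written as `1 - cos ((2i+1)πθ)`. -/
def varianceTerm (t θ : ℝ) (i : ℕ) : ℝ :=
  (1 - exp (-eigenvalue i * t)) / eigenvalue i * (1 - cos ((2 * i + 1) * (π * θ)))

def variance (t θ : ℝ) : ℝ := ∑' i, varianceTerm t θ i

section

variable {t : ℝ} (θ : ℝ)

theorem varianceTerm_nonneg (ht : 0 ≤ t) (i : ℕ) : 0 ≤ varianceTerm t θ i :=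
  mul_nonneg (one_sub_exp_neg_mul_div_nonneg (eigenvalue_pos i) ht)
    (sub_nonneg.2 (cos_le_one _))

theorem summable_varianceTerm (ht : 0 ≤ t) : Summable (varianceTerm t θ) := by
  refine (summable_one_div_eigenvalue.mul_right 2).of_nonneg_of_le
    (varianceTerm_nonneg θ ht) fun i => ?_
  exact mul_le_mul (one_sub_exp_neg_mul_div_le_one_div (eigenvalue_pos i) t)
    (by linarith [neg_one_le_cos ((2 * i + 1) * (π * θ))]) (sub_nonneg.2 (cos_le_one _))
    (one_div_pos.2 (eigenvalue_pos i)).le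

theorem variance_mono {s : ℝ} (hs : 0 ≤ s) (hst : s ≤ t) : variance s θ ≤ variance t θ :=
  (summable_varianceTerm θ hs).tsum_le_tsum
    (fun i => mul_le_mul_of_nonneg_right
      (monotone_one_sub_exp_neg_mul_div (eigenvalue_pos i) hst) (sub_nonneg.2 (cos_le_one _)))
    (summable_varianceTerm θ (hs.trans hst))

theorem half_mul_one_sub_cos_le_varianceTerm (ht : 0 ≤ t) {i : ℕ}
    (hi : (2 * i + 1) * √t ≤ 1 / 2) :
    t / 2 * (1 - cos ((2 * i + 1) * (π * θ))) ≤ varianceTerm t θ i :=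
  mul_le_mul_of_nonneg_right
    (half_le_one_sub_exp_neg_mul_div (eigenvalue_pos i) ht (eigenvalue_mul_le_one ht hi))
    (sub_nonneg.2 (cos_le_one _))

theorem sqrt_div_eight_sub_le_variance (hθ : 0 < sin (π * θ)) (ht : 0 ≤ t) :
    √t / 8 - t / 2 * (1 + 1 / (2 * sin (π * θ))) ≤ variance t θ := by
  rcases ht.eq_or_lt with rfl | ht'
  · simpa [variance] using tsum_nonneg (varianceTerm_nonneg θ le_rfl)
  have hst : 0 < √t := sqrt_pos.2 ht'
  have hquarter : t / 2 * (1 / (4 * √t)) = √t / 8 := by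
    field_simp
    rw [sq_sqrt ht]
    ring
  set N := ⌊1 / (4 * √t)⌋₊
  have hN : (N : ℝ) ≤ 1 / (4 * √t) := Nat.floor_le (by positivity)
  have hN' : 1 / (4 * √t) - 1 ≤ N := by linarith [Nat.lt_floor_add_one (1 / (4 * √t))]
  have hmodes : ∀ i ∈ Finset.range N,
      t / 2 * (1 - cos ((2 * i + 1) * (π * θ))) ≤ varianceTerm t θ i := by
    intro i hi
    have hiN : (i : ℝ) + 1 ≤ N := by exact_mod_cast Finset.mem_range.1 hi
    refine half_mul_one_sub_cos_le_varianceTerm θ ht ?_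
    calc (2 * i + 1) * √t ≤ 2 * (1 / (4 * √t)) * √t := by gcongr; linarith
      _ = 1 / 2 := by field_simp; ring
  calc √t / 8 - t / 2 * (1 + 1 / (2 * sin (π * θ)))
      = t / 2 * (1 / (4 * √t) - 1 - 1 / (2 * sin (π * θ))) := by
        rw [mul_sub, mul_sub, hquarter]
        ring
    _ ≤ t / 2 * (N - ∑ i ∈ Finset.range N, cos ((2 * i + 1) * (π * θ))) := by
        gcongr
        linarith [sum_range_cos_odd_mul_le hθ N]
    _ = ∑ i ∈ Finset.range N, t / 2 * (1 - cos ((2 * i + 1) * (π * θ))) := by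
        simp only [mul_sub, mul_one, Finset.sum_sub_distrib, Finset.sum_const,
          Finset.card_range, nsmul_eq_mul, ← Finset.mul_sum]
        ring
    _ ≤ ∑ i ∈ Finset.range N, varianceTerm t θ i := Finset.sum_le_sum hmodes
    _ ≤ variance t θ :=
        (summable_varianceTerm θ ht).sum_le_tsum _ fun i _ => varianceTerm_nonneg θ ht i

end

theorem sqrt_div_sixteen_le_variance {δ t θ : ℝ} (hδ : 0 < δ) (hθ : θ ∈ Set.Icc δ (1 - δ))
    (ht : 0 ≤ t) (hsmall : √t * (8 * (1 + 1 / (4 * δ))) ≤ 1) : √t / 16 ≤ variance t θ := by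
  obtain ⟨hθ₁, hθ₂⟩ := hθ
  have hsin : 2 * δ ≤ sin (π * θ) :=
    calc 2 * δ ≤ 2 * min θ (1 - θ) := by gcongr; exact le_min hθ₁ (by linarith)
      _ ≤ sin (π * θ) := two_mul_min_le_sin_pi_mul (by linarith) (by linarith)
  have hta : t * (8 * (1 + 1 / (4 * δ))) ≤ √t :=
    calc t * (8 * (1 + 1 / (4 * δ))) = √t * (√t * (8 * (1 + 1 / (4 * δ)))) := by
          rw [← mul_assoc √t, mul_self_sqrt ht]
      _ ≤ √t := mul_le_of_le_one_right (sqrt_nonneg t) hsmall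
  calc √t / 16 ≤ √t / 8 - t / 2 * (1 + 1 / (4 * δ)) := by linarith
    _ ≤ √t / 8 - t / 2 * (1 + 1 / (2 * sin (π * θ))) := by
        gcongr √t / 8 - t / 2 * (1 + 1 / ?_)
        linarith
    _ ≤ variance t θ := sqrt_div_eight_sub_le_variance θ (by linarith) ht

theorem exists_mul_sqrt_le_variance {δ : ℝ} (hδ : 0 < δ) :
    ∃ κ > 0, ∀ t ∈ Set.Icc (0 : ℝ) 1, ∀ θ ∈ Set.Icc δ (1 - δ), κ * √t ≤ variance t θ := by
  obtain ⟨a, ha_def⟩ : ∃ a : ℝ, a = 8 * (1 + 1 / (4 * δ)) := ⟨_, rfl⟩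
  have ha : 8 ≤ a := by linarith [(by positivity : 0 < 1 / (4 * δ))]
  refine ⟨1 / (16 * a), by positivity, fun t ⟨ht₀, ht₁⟩ θ hθ => ?_⟩
  rcases le_total (√t * a) 1 with h | h
  · calc 1 / (16 * a) * √t ≤ √t / 16 := by
          rw [div_mul_eq_mul_div, one_mul]
          gcongr
          linarith
      _ ≤ variance t θ := sqrt_div_sixteen_le_variance hδ hθ ht₀ (ha_def ▸ h)
  · have hsq : √((1 / a) ^ 2) = 1 / a := sqrt_sq (by positivity)
    have hle : (1 / a) ^ 2 ≤ t := by
      rw [← sq_sqrt ht₀]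
      gcongr
      rw [div_le_iff₀ (by positivity)]
      linarith
    calc 1 / (16 * a) * √t ≤ 1 / (16 * a) * 1 := by gcongr; exact sqrt_le_one.2 ht₁
      _ = √((1 / a) ^ 2) / 16 := by rw [hsq]; ring
      _ ≤ variance ((1 / a) ^ 2) θ :=
          sqrt_div_sixteen_le_variance hδ hθ (by positivity)
            (by rw [hsq, ← ha_def, one_div_mul_cancel (by positivity)])
      _ ≤ variance t θ := variance_mono θ (by positivity) hle

end DirichletNeumannHeat

open DirichletNeumannHeat in
/-- Short-time lower bound `q_t(θ) ≥ κ_δ √t` for the variance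
`q_t(θ) = Σ_i (1-e^{-λ_i t})/λ_i · e_i(θ)²` of the stochastic heat equation. -/
theorem stmt_17 (lamE : ℕ → ℝ) (hlam : ∀ n, lamE n = π ^ 2 / 4 * (2 * (n : ℝ) + 1) ^ 2)
    (e : ℕ → ℝ → ℝ)
    (he : ∀ n θ, e n θ = Real.sqrt 2 * Real.sin (Real.sqrt (lamE n) * θ))
    (δ : ℝ) (hδ : δ ∈ Set.Ioo (0:ℝ) (1 / 2)) :
    ∃ κ > 0, ∀ t ∈ Set.Icc (0:ℝ) 1, ∀ θ ∈ Set.Icc δ (1 - δ),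
      κ * Real.sqrt t ≤ ∑' i, (1 - Real.exp (-(lamE i) * t)) / lamE i * (e i θ) ^ 2 := by
  obtain rfl : lamE = eigenvalue := funext hlam
  have hq : ∀ t θ, ∑' i, (1 - exp (-eigenvalue i * t)) / eigenvalue i * (e i θ) ^ 2
      = variance t θ := fun t θ => tsum_congr fun i => by
    rw [varianceTerm, he, sq_sqrt_two_mul_sin, sqrt_eigenvalue]
    ring_nf
  simpa only [hq] using exists_mul_sqrt_le_variance hδ.1

end
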